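/- arXiv:1501.05856 — 5 statements merged into one kernel-verified Lean document; each statement's English description precedes it below -/
import Mathlib

section
/- For every integer n ≥ 2, the domination polynomial of the generalized friendship graph F_{4,n} satisfies the recurrence D(F_{4,n},x) = ((1+x)^3 + x)·D(F_{4,n-1},x) − (1+3x)·(x+3x^2+x^3)^{n−1} + (1+x)^3·x^{n−1} − (x^2+x)·(x^3+3x^2+3x)^{n−1}, where D(F_{4,1},x) = x^4+4x^3+6x^2. -/
open Polynomial Finset

/-- `S` is a dominating set of the graph `G`: every vertex not in `S` has a neighbor in `S`. -/
def SimpleGraph.IsDomSet {V : Type*} (G : SimpleGraph V) (S : Finset V) : Prop :=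
  ∀ v : V, v ∈ S ∨ ∃ u ∈ S, G.Adj u v

open Classical in
/-- The domination polynomial of a finite graph `G`:
`D(G,x) = ∑ d(G,i) xⁱ` where `d(G,i)` is the number of dominating sets of size `i`. -/
noncomputable def domPoly {V : Type*} [Fintype V] (G : SimpleGraph V) : Polynomial ℂ :=
  ∑ S ∈ Finset.univ.filter (fun S : Finset V => G.IsDomSet S), X ^ S.card

/-- The generalized friendship (flower) graph `F_{4,n}`: `n` cycles of length `4`
meeting at a single common vertex (the vertex `none`).  The `i`-th cycle is
`none — (i,0) — (i,1) — (i,2) — none`. -/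
def flower4 (n : ℕ) : SimpleGraph (Option (Fin n × Fin 3)) :=
  SimpleGraph.fromRel (fun a b =>
    (a = none ∧ ∃ i, b = some (i, 0)) ∨
    (a = none ∧ ∃ i, b = some (i, 2)) ∨
    (∃ i, a = some (i, 0) ∧ b = some (i, 1)) ∨
    (∃ i, a = some (i, 1) ∧ b = some (i, 2)))

/-
A dominating set of `F_{4,n}` either contains the centre or not. If it does, the ends of every
petal path are dominated and each petal only has to meet the set, giving `(1+x)^3 - 1` per
petal. If it does not, each petal must dominate its own path `P_3` (`x + 3x^2 + x^3` per petal),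
and the centre must have a neighbour in the set, which rules out exactly the choice of the
middle vertex alone in every petal (`x^n`). So
`D(F_{4,n}, x) = x (x^3 + 3x^2 + 3x)^n + (x + 3x^2 + x^3)^n - x^n`,
and the recurrence is a polynomial identity between two instances of this closed form.
-/

open Finset SimpleGraph

section OptionProd

variable {ι α : Type*} [Fintype ι] [Fintype α] [DecidableEq α]

def optionProdFinset (c : Bool) (g : ι → Finset α) : Finset (Option (ι × α)) :=
  univ.filter fun v => v.elim c fun p => p.2 ∈ g p.1

@[simp] lemma none_mem_optionProdFinset {c : Bool} {g : ι → Finset α} :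
    none ∈ optionProdFinset c g ↔ c = true := by
  simp [optionProdFinset]

@[simp] lemma some_mem_optionProdFinset {c : Bool} {g : ι → Finset α} {i : ι} {a : α} :
    some (i, a) ∈ optionProdFinset c g ↔ a ∈ g i := by
  simp [optionProdFinset]

def finsetOptionProdEquiv [DecidableEq ι] : Bool × (ι → Finset α) ≃ Finset (Option (ι × α)) where
  toFun p := optionProdFinset p.1 p.2
  invFun S := (decide (none ∈ S), fun i => univ.filter fun a => some (i, a) ∈ S)
  left_inv := by
    rintro ⟨c, g⟩
    ext <;> simp
  right_inv S := by
    ext (_ | ⟨i, a⟩) <;> simp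

lemma card_optionProdFinset (c : Bool) (g : ι → Finset α) :
    #(optionProdFinset c g) = (if c then 1 else 0) + ∑ i, #(g i) := by
  rw [optionProdFinset, card_filter, Fintype.sum_option, Fintype.sum_prod_type]
  cases c <;> simp

end OptionProd

section PiSums

variable {ι β R : Type*} [Fintype ι] [DecidableEq ι] [Fintype β]

lemma sum_pi_filter_forall_prod [CommSemiring R] (P : β → Prop) [DecidablePred P]
    [DecidablePred fun g : ι → β => ∀ i, P (g i)] (f : β → R) :
    ∑ g : ι → β with ∀ i, P (g i), ∏ i, f (g i) = (∑ b with P b, f b) ^ Fintype.card ι := by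
  rw [← card_univ, ← prod_const, prod_univ_sum]
  congr 1
  ext g
  simp [Fintype.mem_piFinset]

lemma sum_pi_filter_exists_forall_prod [CommRing R] (P Q : β → Prop) [DecidablePred P]
    [DecidablePred Q] [DecidablePred fun g : ι → β => (∃ i, Q (g i)) ∧ ∀ i, P (g i)]
    (f : β → R) :
    ∑ g : ι → β with (∃ i, Q (g i)) ∧ ∀ i, P (g i), ∏ i, f (g i) =
      (∑ b with P b, f b) ^ Fintype.card ι - (∑ b with P b ∧ ¬ Q b, f b) ^ Fintype.card ι := by
  classical
  rw [← sum_pi_filter_forall_prod, ← sum_pi_filter_forall_prod, eq_sub_iff_add_eq,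
    ← sum_filter_add_sum_filter_not (univ.filter fun g : ι → β => ∀ i, P (g i))
      (fun g => ∃ i, Q (g i)),
    filter_filter, filter_filter]
  congr 2 <;> ext g <;> simp [and_comm, forall_and]

end PiSums

instance (n : ℕ) : DecidableRel (pathGraph n).Adj := fun _ _ => decidable_of_iff' _ pathGraph_adj

section Flower

variable {n : ℕ}

@[simp] lemma flower4_adj_none_some {i : Fin n} {j : Fin 3} :
    (flower4 n).Adj none (some (i, j)) ↔ j ≠ 1 := by
  fin_cases j <;> simp [flower4]

@[simp] lemma flower4_adj_some_none {i : Fin n} {j : Fin 3} :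
    (flower4 n).Adj (some (i, j)) none ↔ j ≠ 1 := by
  rw [adj_comm, flower4_adj_none_some]

@[simp] lemma flower4_adj_some_some {i i' : Fin n} {j j' : Fin 3} :
    (flower4 n).Adj (some (i, j)) (some (i', j')) ↔ i = i' ∧ (pathGraph 3).Adj j j' := by
  fin_cases j <;> fin_cases j' <;> simp [flower4, pathGraph_adj] <;> grind

/-- Every vertex of a petal `0 — 1 — 2` with vertex set `t` is dominated, where `c` records
whether the centre, adjacent to `0` and `2`, is in the set. -/
def PetalDominated (c : Bool) (t : Finset (Fin 3)) : Prop :=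
  ∀ j, j ∈ t ∨ (c = true ∧ j ≠ 1) ∨ ∃ k ∈ t, (pathGraph 3).Adj k j

instance (c : Bool) : DecidablePred (PetalDominated c) := fun _ => by
  unfold PetalDominated; infer_instance

lemma isDomSet_optionProdFinset_iff (c : Bool) (g : Fin n → Finset (Fin 3)) :
    (flower4 n).IsDomSet (optionProdFinset c g) ↔
      (c = true ∨ ∃ i, ∃ j ∈ g i, j ≠ 1) ∧ ∀ i, PetalDominated c (g i) := by
  simp only [IsDomSet, PetalDominated, Option.forall, Prod.forall, Option.exists, Prod.exists]
  simp

lemma sum_finset_fin_three {R : Type*} [AddCommMonoid R] (f : Finset (Fin 3) → R) :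
    ∑ t, f t = f ∅ + f {0} + f {1} + f {2} + f {0, 1} + f {0, 2} + f {1, 2} + f {0, 1, 2} := by
  rw [show (univ : Finset (Finset (Fin 3))) = {∅, {0}, {1}, {2}, {0, 1}, {0, 2}, {1, 2}, {0, 1, 2}}
    by decide]
  simp +decide [add_assoc]

variable {R : Type*} [CommSemiring R] (x : R)

lemma sum_petalDominated_true :
    ∑ t with PetalDominated true t, x ^ #t = x ^ 3 + 3 * x ^ 2 + 3 * x := by
  rw [sum_filter, sum_finset_fin_three]
  simp +decide
  ring

lemma sum_petalDominated_false :
    ∑ t with PetalDominated false t, x ^ #t = x + 3 * x ^ 2 + x ^ 3 := by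
  rw [sum_filter, sum_finset_fin_three]
  simp +decide
  ring

lemma sum_petalDominated_false_and_not_exists_ne_one :
    ∑ t with PetalDominated false t ∧ ¬ ∃ j ∈ t, j ≠ 1, x ^ #t = x := by
  rw [sum_filter, sum_finset_fin_three]
  simp +decide

end Flower

theorem domPoly_flower4 (n : ℕ) :
    domPoly (flower4 n) = X * (X ^ 3 + 3 * X ^ 2 + 3 * X) ^ n
      + ((X + 3 * X ^ 2 + X ^ 3) ^ n - X ^ n) := by
  rw [domPoly, sum_filter, ← finsetOptionProdEquiv.sum_comp, Fintype.sum_prod_type,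
    Fintype.sum_bool]
  simp only [finsetOptionProdEquiv, Equiv.coe_fn_mk, isDomSet_optionProdFinset_iff,
    card_optionProdFinset, pow_add, ← prod_pow_eq_pow_sum, true_or, true_and, ↓reduceIte,
    pow_one, Bool.false_eq_true, false_or, pow_zero, one_mul]
  rw [← sum_filter, ← sum_filter, ← mul_sum,
    sum_pi_filter_forall_prod (PetalDominated true) (fun t => (X : ℂ[X]) ^ #t),
    sum_pi_filter_exists_forall_prod (PetalDominated false) (fun t => ∃ j ∈ t, j ≠ 1)
      (fun t => (X : ℂ[X]) ^ #t),
    sum_petalDominated_true, sum_petalDominated_false, sum_petalDominated_false_and_not_exists_ne_one,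
    Fintype.card_fin]

/-- For every `n ≥ 2`,
`D(F_{4,n},x) = ((1+x)³+x)·D(F_{4,n-1},x) − (1+3x)(x+3x²+x³)^{n-1}
  + (1+x)³·x^{n-1} − (x²+x)(x³+3x²+3x)^{n-1}`,
where `D(F_{4,1},x) = x⁴+4x³+6x²`. -/
theorem domPoly_flower4_recurrence :
    domPoly (flower4 1) = X ^ 4 + 4 * X ^ 3 + 6 * X ^ 2 ∧
    ∀ n : ℕ, 2 ≤ n →
      domPoly (flower4 n) =
        ((1 + X) ^ 3 + X) * domPoly (flower4 (n - 1))
          - (1 + 3 * X) * (X + 3 * X ^ 2 + X ^ 3) ^ (n - 1)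
          + (1 + X) ^ 3 * X ^ (n - 1)
          - (X ^ 2 + X) * (X ^ 3 + 3 * X ^ 2 + 3 * X) ^ (n - 1) := by
  refine ⟨by rw [domPoly_flower4]; ring, fun n hn => ?_⟩
  obtain ⟨m, rfl⟩ : ∃ m, n = m + 1 := ⟨n - 1, by omega⟩
  rw [Nat.add_sub_cancel, domPoly_flower4, domPoly_flower4]
  ring
end

section
/- Let G be a finite simple graph and u any vertex of G. Then D(G,x) = x·D(G/u,x) + D(G−u,x) + x·D(G−N[u],x) − (1+x)·p_u(G,x). -/
open Polynomial

/-- The vertex contraction `G/u`: join all pairs of vertices in `N(u)` by edges and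
then delete `u`. -/
def SimpleGraph.contractVert {V : Type*} (G : SimpleGraph V) (u : V) :
    SimpleGraph {v : V // v ≠ u} :=
  SimpleGraph.fromRel (fun a b => G.Adj a b ∨ (G.Adj u a ∧ G.Adj u b))

/-- The vertex deletion `G − u`. -/
def SimpleGraph.deleteVert {V : Type*} (G : SimpleGraph V) (u : V) :
    SimpleGraph {v : V // v ≠ u} :=
  SimpleGraph.comap Subtype.val G

/-- The graph `G − N[u]`, obtained by deleting the closed neighborhood of `u`. -/
def SimpleGraph.deleteClosedNbhd {V : Type*} (G : SimpleGraph V) (u : V) :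
    SimpleGraph {v : V // v ≠ u ∧ ¬ G.Adj u v} :=
  SimpleGraph.comap Subtype.val G

open Classical in
/-- `p_u(G,x)`: the generating polynomial (by size) of the dominating sets of `G − u`
which contain no vertex of `N_G(u)`. -/
noncomputable def pPoly {V : Type*} [Fintype V] (G : SimpleGraph V) (u : V) :
    Polynomial ℂ :=
  ∑ S ∈ Finset.univ.filter (fun S : Finset {v : V // v ≠ u} =>
      (G.deleteVert u).IsDomSet S ∧ ∀ v ∈ S, ¬ G.Adj u v.val), X ^ S.card

namespace DomAux

variable {V : Type*} [Fintype V]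

open Classical in
/-- generating polynomial of a family of sets given by a predicate -/
noncomputable def qsum (P : Finset V → Prop) : Polynomial ℂ :=
  ∑ S ∈ Finset.univ.filter P, X ^ S.card

open Classical in
lemma qsum_eq (P : Finset V → Prop) :
    qsum P = ∑ S : Finset V, if P S then (X : Polynomial ℂ) ^ S.card else 0 := by
  rw [qsum, Finset.sum_filter]

lemma qsum_congr {P Q : Finset V → Prop} (h : ∀ S, P S ↔ Q S) : qsum P = qsum Q := by
  rw [qsum_eq, qsum_eq]
  refine Finset.sum_congr rfl fun S _ => ?_
  by_cases hP : P S
  · rw [if_pos hP, if_pos ((h S).1 hP)]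
  · rw [if_neg hP, if_neg (fun hq => hP ((h S).2 hq))]

lemma qsum_split (P Q : Finset V → Prop) :
    qsum P = qsum (fun S => P S ∧ Q S) + qsum (fun S => P S ∧ ¬ Q S) := by
  rw [qsum_eq, qsum_eq, qsum_eq, ← Finset.sum_add_distrib]
  refine Finset.sum_congr rfl fun S _ => ?_
  by_cases hP : P S <;> by_cases hQ : Q S <;> simp [hP, hQ]

lemma qsum_union (P Q : Finset V → Prop) :
    qsum (fun S => P S ∨ Q S) + qsum (fun S => P S ∧ Q S) = qsum P + qsum Q := by
  rw [qsum_eq, qsum_eq, qsum_eq, qsum_eq, ← Finset.sum_add_distrib, ← Finset.sum_add_distrib]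
  refine Finset.sum_congr rfl fun S _ => ?_
  by_cases hP : P S <;> by_cases hQ : Q S <;> simp [hP, hQ]

open Classical in
lemma qsum_erase [DecidableEq V] (u : V) (R : Finset V → Prop) :
    qsum (fun S => u ∈ S ∧ R (S.erase u)) = X * qsum (fun T => u ∉ T ∧ R T) := by
  rw [qsum, qsum, Finset.mul_sum]
  refine Finset.sum_nbij' (fun S => S.erase u) (fun T => insert u T)
    (fun S hS => ?_) (fun T hT => ?_) (fun S hS => ?_) (fun T hT => ?_) (fun S hS => ?_)
  · simp only [Finset.mem_filter, Finset.mem_univ, true_and] at hS ⊢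
    exact ⟨Finset.notMem_erase u S, hS.2⟩
  · simp only [Finset.mem_filter, Finset.mem_univ, true_and] at hT ⊢
    exact ⟨Finset.mem_insert_self u T, by rw [Finset.erase_insert hT.1]; exact hT.2⟩
  · simp only [Finset.mem_filter, Finset.mem_univ, true_and] at hS
    exact Finset.insert_erase hS.1
  · simp only [Finset.mem_filter, Finset.mem_univ, true_and] at hT
    exact Finset.erase_insert hT.1
  · simp only [Finset.mem_filter, Finset.mem_univ, true_and] at hS
    rw [← pow_succ', Finset.card_erase_add_one hS.1]

open Classical in
lemma map_subtype_eq (p : V → Prop) [DecidablePred p] (T : Finset {v : V // p v}) :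
    (T.map (Function.Embedding.subtype p)).subtype p = T := by
  ext a
  simp only [Finset.mem_subtype, Finset.mem_map, Function.Embedding.coe_subtype]
  constructor
  · rintro ⟨b, hb, hba⟩
    rwa [← Subtype.ext hba]
  · intro h
    exact ⟨a, h, rfl⟩

open Classical in
lemma qsum_subtype (p : V → Prop) [DecidablePred p] [Fintype {v : V // p v}] (Q : Finset {v : V // p v} → Prop) [DecidablePred Q] :
    ∑ T ∈ Finset.univ.filter Q, (X : Polynomial ℂ) ^ T.card
      = qsum (fun S => (∀ v ∈ S, p v) ∧ Q (S.subtype p)) := by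
  rw [qsum]
  refine Finset.sum_nbij' (fun T => T.map (Function.Embedding.subtype p))
    (fun S => S.subtype p)
    (fun T hT => ?_) (fun S hS => ?_) (fun T hT => ?_) (fun S hS => ?_) (fun T hT => ?_)
  · simp only [Finset.mem_filter, Finset.mem_univ, true_and] at hT ⊢
    refine ⟨fun v hv => ?_, by rw [map_subtype_eq]; exact hT⟩
    rcases Finset.mem_map.1 hv with ⟨a, _, rfl⟩
    exact a.2
  · simp only [Finset.mem_filter, Finset.mem_univ, true_and] at hS ⊢
    exact hS.2
  · exact map_subtype_eq p T
  · simp only [Finset.mem_filter, Finset.mem_univ, true_and] at hS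
    rw [Finset.subtype_map, Finset.filter_true_of_mem hS.1]
  · rw [Finset.card_map]

variable (G : SimpleGraph V) (u : V)

/-- domination condition for `G/u` transported to `Finset V` -/
def Pc (S : Finset V) : Prop :=
  u ∉ S ∧ ∀ v, v ≠ u →
    (v ∈ S ∨ ∃ w ∈ S, w ≠ v ∧ (G.Adj w v ∨ (G.Adj u w ∧ G.Adj u v)))

/-- domination condition for `G − u` transported to `Finset V` -/
def Pd (S : Finset V) : Prop :=
  u ∉ S ∧ ∀ v, v ≠ u → (v ∈ S ∨ ∃ w ∈ S, G.Adj w v)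

/-- domination of the vertices outside `N[u]` -/
def Bc (S : Finset V) : Prop :=
  ∀ v, v ≠ u → ¬ G.Adj u v → (v ∈ S ∨ ∃ w ∈ S, G.Adj w v)

/-- domination condition for `G − N[u]` transported to `Finset V` -/
def PN (S : Finset V) : Prop :=
  (u ∉ S ∧ ∀ w ∈ S, ¬ G.Adj u w) ∧ Bc G u S

/-- condition for the sets counted by `p_u` transported to `Finset V` -/
def Pp (S : Finset V) : Prop :=
  Pd G u S ∧ ∀ w ∈ S, ¬ G.Adj u w

lemma L1 [DecidableEq V] (S : Finset V) :
    (G.IsDomSet S ∧ u ∈ S) ↔ (u ∈ S ∧ Bc G u (S.erase u)) := by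
  constructor
  · rintro ⟨hd, hu⟩
    refine ⟨hu, fun v hv hadj => ?_⟩
    rcases hd v with h | ⟨w, hw, hwa⟩
    · exact Or.inl (Finset.mem_erase.2 ⟨hv, h⟩)
    · rcases eq_or_ne w u with rfl | hwu
      · exact absurd hwa hadj
      · exact Or.inr ⟨w, Finset.mem_erase.2 ⟨hwu, hw⟩, hwa⟩
  · rintro ⟨hu, hb⟩
    refine ⟨fun v => ?_, hu⟩
    rcases eq_or_ne v u with rfl | hv
    · exact Or.inl hu
    by_cases hadj : G.Adj u v
    · exact Or.inr ⟨u, hu, hadj⟩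
    rcases hb v hv hadj with h | ⟨w, hw, hwa⟩
    · exact Or.inl (Finset.mem_of_mem_erase h)
    · exact Or.inr ⟨w, Finset.mem_of_mem_erase hw, hwa⟩

lemma L2 (S : Finset V) :
    (G.IsDomSet S ∧ ¬ u ∈ S) ↔ (Pd G u S ∧ ¬ ∀ w ∈ S, ¬ G.Adj u w) := by
  constructor
  · rintro ⟨hd, hu⟩
    refine ⟨⟨hu, fun v _ => hd v⟩, fun hav => ?_⟩
    rcases hd u with h | ⟨w, hw, hwa⟩
    · exact hu h
    · exact hav w hw hwa.symm
  · rintro ⟨⟨hu, hd⟩, hav⟩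
    push_neg at hav
    obtain ⟨w0, hw0, ha0⟩ := hav
    refine ⟨fun v => ?_, hu⟩
    rcases eq_or_ne v u with rfl | hv
    · exact Or.inr ⟨w0, hw0, ha0.symm⟩
    · exact hd v hv

lemma L3 (T : Finset V) :
    (u ∉ T ∧ Bc G u T) ↔ (Pc G u T ∨ PN G u T) := by
  constructor
  · rintro ⟨hu, hb⟩
    by_cases hx : ∀ w ∈ T, ¬ G.Adj u w
    · exact Or.inr ⟨⟨hu, hx⟩, hb⟩
    · push_neg at hx
      obtain ⟨w0, hw0, ha0⟩ := hx
      refine Or.inl ⟨hu, fun v hv => ?_⟩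
      by_cases hvT : v ∈ T
      · exact Or.inl hvT
      by_cases hadj : G.Adj u v
      · exact Or.inr ⟨w0, hw0, fun h => hvT (h ▸ hw0), Or.inr ⟨ha0, hadj⟩⟩
      · rcases hb v hv hadj with h | ⟨w, hw, hwa⟩
        · exact absurd h hvT
        · exact Or.inr ⟨w, hw, hwa.ne, Or.inl hwa⟩
  · rintro (⟨hu, hc⟩ | ⟨⟨hu, _⟩, hb⟩)
    · refine ⟨hu, fun v hv hadj => ?_⟩
      rcases hc v hv with h | ⟨w, hw, _, hor⟩
      · exact Or.inl h
      rcases hor with h1 | ⟨_, h3⟩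
      · exact Or.inr ⟨w, hw, h1⟩
      · exact absurd h3 hadj
    · exact ⟨hu, hb⟩

lemma L4 (T : Finset V) :
    (Pc G u T ∧ PN G u T) ↔ Pp G u T := by
  constructor
  · rintro ⟨⟨hu, hc⟩, ⟨⟨-, hav⟩, hb⟩⟩
    refine ⟨⟨hu, fun v hv => ?_⟩, hav⟩
    by_cases hadj : G.Adj u v
    · rcases hc v hv with h | ⟨w, hw, _, hor⟩
      · exact Or.inl h
      rcases hor with h1 | ⟨h2, _⟩
      · exact Or.inr ⟨w, hw, h1⟩
      · exact absurd h2 (hav w hw)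
    · exact hb v hv hadj
  · rintro ⟨⟨hu, hd⟩, hav⟩
    refine ⟨⟨hu, fun v hv => ?_⟩, ⟨⟨hu, hav⟩, fun v hv _ => hd v hv⟩⟩
    rcases hd v hv with h | ⟨w, hw, hwa⟩
    · exact Or.inl h
    · exact Or.inr ⟨w, hw, hwa.ne, Or.inl hwa⟩

open Classical in
lemma deleteVert_iff [DecidablePred fun v : V => v ≠ u] (S : Finset V) :
    ((∀ v ∈ S, v ≠ u) ∧ (G.deleteVert u).IsDomSet (S.subtype (fun v => v ≠ u)))
      ↔ Pd G u S := by
  constructor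
  · rintro ⟨hp, hd⟩
    refine ⟨fun hu => hp u hu rfl, fun v hv => ?_⟩
    rcases hd ⟨v, hv⟩ with h | ⟨w, hw, ha⟩
    · exact Or.inl (Finset.mem_subtype.1 h)
    · exact Or.inr ⟨w.1, Finset.mem_subtype.1 hw, ha⟩
  · rintro ⟨hu, hd⟩
    refine ⟨fun v hv h => hu (h ▸ hv), fun a => ?_⟩
    rcases hd a.1 a.2 with h | ⟨w, hw, ha⟩
    · exact Or.inl (Finset.mem_subtype.2 h)
    · exact Or.inr ⟨⟨w, fun h => hu (h ▸ hw)⟩, Finset.mem_subtype.2 hw, ha⟩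

open Classical in
lemma contract_iff [DecidablePred fun v : V => v ≠ u] (S : Finset V) :
    ((∀ v ∈ S, v ≠ u) ∧ (G.contractVert u).IsDomSet (S.subtype (fun v => v ≠ u)))
      ↔ Pc G u S := by
  constructor
  · rintro ⟨hp, hd⟩
    refine ⟨fun hu => hp u hu rfl, fun v hv => ?_⟩
    rcases hd ⟨v, hv⟩ with h | ⟨w, hw, ha⟩
    · exact Or.inl (Finset.mem_subtype.1 h)
    · rw [SimpleGraph.contractVert, SimpleGraph.fromRel_adj] at ha
      obtain ⟨hne, hor⟩ := ha
      have hne' : w.1 ≠ v := fun h => hne (Subtype.ext h)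
      refine Or.inr ⟨w.1, Finset.mem_subtype.1 hw, hne', ?_⟩
      rcases hor with (h1 | ⟨h2, h3⟩) | (h1 | ⟨h2, h3⟩)
      · exact Or.inl h1
      · exact Or.inr ⟨h2, h3⟩
      · exact Or.inl h1.symm
      · exact Or.inr ⟨h3, h2⟩
  · rintro ⟨hu, hc⟩
    refine ⟨fun v hv h => hu (h ▸ hv), fun a => ?_⟩
    rcases hc a.1 a.2 with h | ⟨w, hw, hne, hor⟩
    · exact Or.inl (Finset.mem_subtype.2 h)
    · refine Or.inr ⟨⟨w, fun h => hu (h ▸ hw)⟩, Finset.mem_subtype.2 hw, ?_⟩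
      rw [SimpleGraph.contractVert, SimpleGraph.fromRel_adj]
      exact ⟨fun h => hne (congrArg Subtype.val h), Or.inl hor⟩

open Classical in
lemma delClosed_iff [DecidablePred fun v : V => v ≠ u ∧ ¬ G.Adj u v] (S : Finset V) :
    ((∀ v ∈ S, v ≠ u ∧ ¬ G.Adj u v) ∧
        (G.deleteClosedNbhd u).IsDomSet (S.subtype (fun v => v ≠ u ∧ ¬ G.Adj u v)))
      ↔ PN G u S := by
  constructor
  · rintro ⟨hp, hd⟩
    refine ⟨⟨fun hu => (hp u hu).1 rfl, fun w hw => (hp w hw).2⟩, fun v hv hadj => ?_⟩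
    rcases hd ⟨v, hv, hadj⟩ with h | ⟨w, hw, ha⟩
    · exact Or.inl (Finset.mem_subtype.1 h)
    · exact Or.inr ⟨w.1, Finset.mem_subtype.1 hw, ha⟩
  · rintro ⟨⟨hu, hav⟩, hb⟩
    refine ⟨fun v hv => ⟨fun h => hu (h ▸ hv), hav v hv⟩, fun a => ?_⟩
    rcases hb a.1 a.2.1 a.2.2 with h | ⟨w, hw, ha⟩
    · exact Or.inl (Finset.mem_subtype.2 h)
    · exact Or.inr ⟨⟨w, fun h => hu (h ▸ hw), hav w hw⟩, Finset.mem_subtype.2 hw, ha⟩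

open Classical in
lemma bridge_del : domPoly (G.deleteVert u) = qsum (Pd G u) := by
  rw [domPoly]
  exact (qsum_subtype (fun v => v ≠ u) (fun T => (G.deleteVert u).IsDomSet T)).trans
    (qsum_congr (deleteVert_iff G u))

open Classical in
lemma bridge_contract : domPoly (G.contractVert u) = qsum (Pc G u) := by
  rw [domPoly]
  exact (qsum_subtype (fun v => v ≠ u) (fun T => (G.contractVert u).IsDomSet T)).trans
    (qsum_congr (contract_iff G u))

open Classical in
lemma bridge_delN : domPoly (G.deleteClosedNbhd u) = qsum (PN G u) := by
  rw [domPoly]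
  exact (qsum_subtype (fun v => v ≠ u ∧ ¬ G.Adj u v)
      (fun T => (G.deleteClosedNbhd u).IsDomSet T)).trans
    (qsum_congr (delClosed_iff G u))

open Classical in
lemma bridge_p : pPoly G u = qsum (Pp G u) := by
  rw [pPoly]
  refine (qsum_subtype (fun v => v ≠ u)
    (fun T => (G.deleteVert u).IsDomSet T ∧ ∀ v ∈ T, ¬ G.Adj u v.val)).trans ?_
  refine qsum_congr fun S => ?_
  constructor
  · rintro ⟨hp, hd, hav⟩
    refine ⟨(deleteVert_iff G u S).1 ⟨hp, hd⟩, fun w hw => ?_⟩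
    exact hav ⟨w, hp w hw⟩ (Finset.mem_subtype.2 hw)
  · rintro ⟨hpd, hav⟩
    obtain ⟨hp, hd⟩ := (deleteVert_iff G u S).2 hpd
    exact ⟨hp, hd, fun a ha => hav a.1 (Finset.mem_subtype.1 ha)⟩

end DomAux

open Classical in
/-- Vertex reduction formula:
`D(G,x) = x·D(G/u,x) + D(G−u,x) + x·D(G−N[u],x) − (1+x)·p_u(G,x)`. -/
theorem domPoly_vertex_reduction {V : Type*} [Fintype V] (G : SimpleGraph V) (u : V) :
    domPoly G =
      X * domPoly (G.contractVert u) + domPoly (G.deleteVert u)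
        + X * domPoly (G.deleteClosedNbhd u) - (1 + X) * pPoly G u := by
  open DomAux in
  haveI : DecidableEq V := Classical.decEq V
  have hb1 := DomAux.bridge_contract G u
  have hb2 := DomAux.bridge_del G u
  have hb3 := DomAux.bridge_delN G u
  have hb4 := DomAux.bridge_p G u
  have hG : domPoly G = qsum (fun S => G.IsDomSet S) := rfl
  have s1 := qsum_split (fun S : Finset V => G.IsDomSet S) (fun S => u ∈ S)
  have e2 : qsum (fun S : Finset V => G.IsDomSet S ∧ u ∈ S)
      = qsum (fun S => u ∈ S ∧ Bc G u (S.erase u)) := qsum_congr (L1 G u)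
  have e3 := qsum_erase u (Bc G u)
  have e4 : qsum (fun T : Finset V => u ∉ T ∧ Bc G u T)
      = qsum (fun T => Pc G u T ∨ PN G u T) := qsum_congr (L3 G u)
  have e5 := qsum_union (Pc G u) (PN G u)
  have e6 : qsum (fun T : Finset V => Pc G u T ∧ PN G u T) = qsum (Pp G u) :=
    qsum_congr (L4 G u)
  have e7 : qsum (fun S : Finset V => G.IsDomSet S ∧ ¬ u ∈ S)
      = qsum (fun S => Pd G u S ∧ ¬ ∀ w ∈ S, ¬ G.Adj u w) := qsum_congr (L2 G u)
  have s2 := qsum_split (Pd G u) (fun S => ∀ w ∈ S, ¬ G.Adj u w)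
  have e9 : qsum (fun S : Finset V => Pd G u S ∧ ∀ w ∈ S, ¬ G.Adj u w)
      = qsum (Pp G u) := qsum_congr (fun S => Iff.rfl)
  linear_combination hG + s1 + e2 + e3 + X * e4 + X * e5 - X * e6 + e7 - s2 - e9
    - X * hb1 - hb2 - X * hb3 + (1 + X) * hb4
end

section
/- Let G be a finite simple graph and e = {u,v} any edge of G. Then D(G,x) = D(G−e,x) + (x/(x−1))·[ D(G−e/u,x) + D(G−e/v,x) − D(G/u,x) − D(G/v,x) − D(G−N[u],x) − D(G−N[v],x) + D(G−e−N[u],x) + D(G−e−N[v],x) ], equivalently (x−1)·(D(G,x) − D(G−e,x)) equals x times the bracketed sum as an identity of polynomials. -/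
open Polynomial

/-!
Kotek, Preen, Simon, Tittmann and Trinks' vertex recurrence
`D(G) = x D(G/u) + D(G−u) + x D(G−N[u]) − (1+x) p_u(G)`, where `p_u(G)` counts the dominating
sets of `G − u` that contain no neighbour of `u`, holds for `G` and for `G − e` at both ends of
`e = uv`. Since `G − u = (G − e) − u`, subtracting the four instances leaves only the terms
`(1+x) (p_w(G) − p_w(G − e))`, and these are accounted for by
`D(G) − D(G − e) = (p_u(G − e) − p_u(G)) + (p_v(G − e) − p_v(G))`: a dominating set of `G` that
fails in `G − e` contains exactly one end of `e`, say `v`, and is then a dominating set of `G − u`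
meeting `N_G(u)` only in `v`.
-/

open Finset

section CardPoly

variable {V : Type*} [Fintype V]

open Classical in
noncomputable def cardPoly (p : Finset V → Prop) : ℂ[X] :=
  ∑ S ∈ univ.filter p, X ^ #S

theorem cardPoly_congr {p q : Finset V → Prop} (h : ∀ S, p S ↔ q S) :
    cardPoly p = cardPoly q := by
  rw [funext fun S => propext (h S)]

theorem cardPoly_and_add_not_and (q p : Finset V → Prop) :
    cardPoly (fun S => q S ∧ p S) + cardPoly (fun S => ¬ q S ∧ p S) = cardPoly p := by
  classical
  simp only [cardPoly, sum_filter, ← sum_add_distrib]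
  refine sum_congr rfl fun S _ => ?_
  by_cases hq : q S <;> simp [hq]

theorem cardPoly_mem_and [DecidableEq V] (a : V) (p : Finset V → Prop) :
    cardPoly (fun S => a ∈ S ∧ p S) = X * cardPoly (fun S => a ∉ S ∧ p (insert a S)) := by
  rw [cardPoly, cardPoly, mul_sum]
  refine sum_nbij' (fun S => S.erase a) (insert a) ?_ ?_ ?_ ?_ ?_
  all_goals simp only [mem_filter, mem_univ, true_and]
  · rintro S ⟨ha, hp⟩
    simpa [insert_erase ha] using hp
  · rintro S ⟨ha, hp⟩
    exact ⟨mem_insert_self a S, hp⟩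
  · rintro S ⟨ha, -⟩
    exact insert_erase ha
  · rintro S ⟨ha, -⟩
    exact erase_insert ha
  · rintro S ⟨ha, -⟩
    rw [← pow_succ', card_erase_add_one ha]

end CardPoly

namespace SimpleGraph

variable {V : Type*} {G H : SimpleGraph V} {S : Finset V} {A A' B : Set V} {u v : V}

def DominatesOn (G : SimpleGraph V) (S : Finset V) (B : Set V) : Prop :=
  ∀ w ∈ B, w ∉ S → ∃ t ∈ S, G.Adj t w

def closedNbhdCompl (G : SimpleGraph V) (u : V) : Set V :=
  {w | w ≠ u ∧ ¬ G.Adj u w}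

def completeNbhd (G : SimpleGraph V) (u : V) : SimpleGraph V :=
  fromRel fun a b => G.Adj a b ∨ (G.Adj u a ∧ G.Adj u b)

theorem isDomSet_iff_dominatesOn_univ : G.IsDomSet S ↔ G.DominatesOn S Set.univ := by
  refine forall_congr' fun w => ?_
  simp only [Set.mem_univ, true_imp_iff, or_iff_not_imp_left]

theorem DominatesOn.mono (hGH : G ≤ H) (h : G.DominatesOn S B) : H.DominatesOn S B :=
  fun w hw hwS => (h w hw hwS).imp fun _ ⟨ht, hadj⟩ => ⟨ht, hGH hadj⟩

theorem DominatesOn.deleteEdges_of_mem_iff (h : G.DominatesOn S B) (huv : u ∈ S ↔ v ∈ S) :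
    (G.deleteEdges {s(u, v)}).DominatesOn S B := by
  intro w hw hwS
  obtain ⟨t, ht, hadj⟩ := h w hw hwS
  refine ⟨t, ht, deleteEdges_adj.2 ⟨hadj, ?_⟩⟩
  rw [Set.mem_singleton_iff, Sym2.eq_iff]
  rintro (⟨rfl, rfl⟩ | ⟨rfl, rfl⟩)
  exacts [hwS (huv.1 ht), hwS (huv.2 ht)]

theorem closedNbhdCompl_subset_compl : G.closedNbhdCompl u ⊆ {u}ᶜ :=
  fun _ hw => hw.1

theorem closedNbhdCompl_anti (hGH : G ≤ H) : H.closedNbhdCompl u ⊆ G.closedNbhdCompl u :=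
  fun _ ⟨hwu, hw⟩ => ⟨hwu, fun h => hw (hGH h)⟩

theorem completeNbhd_adj {a b : V} :
    (G.completeNbhd u).Adj a b ↔ a ≠ b ∧ (G.Adj a b ∨ (G.Adj u a ∧ G.Adj u b)) := by
  rw [completeNbhd, fromRel_adj]
  constructor
  · rintro ⟨hab, h | h⟩
    · exact ⟨hab, h⟩
    · exact ⟨hab, h.imp (fun h => h.symm) And.symm⟩
  · exact fun ⟨hab, h⟩ => ⟨hab, Or.inl h⟩

theorem completeNbhd_adj_of_not_adj {a b : V} (ha : ¬ G.Adj u a) :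
    (G.completeNbhd u).Adj a b ↔ G.Adj a b := by
  rw [completeNbhd_adj]
  exact ⟨fun ⟨_, h⟩ => h.resolve_right fun h => ha h.1, fun h => ⟨h.ne, Or.inl h⟩⟩

theorem le_completeNbhd : G ≤ G.completeNbhd u :=
  fun _ _ h => completeNbhd_adj.2 ⟨h.ne, Or.inl h⟩

theorem contractVert_eq_comap :
    G.contractVert u = (G.completeNbhd u).comap Subtype.val := by
  ext a b
  rw [comap_adj, contractVert, fromRel_adj, completeNbhd, fromRel_adj, ne_eq, Subtype.ext_iff]

theorem dominatesOn_insert_univ_iff [DecidableEq V] {T : Finset V} :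
    G.DominatesOn (insert u T) Set.univ ↔ G.DominatesOn T (G.closedNbhdCompl u) := by
  constructor
  · rintro h w ⟨hwu, huw⟩ hwT
    obtain ⟨t, ht, hadj⟩ := h w trivial (by simp [hwu, hwT])
    rcases mem_insert.1 ht with rfl | ht
    exacts [(huw hadj).elim, ⟨t, ht, hadj⟩]
  · intro h w _ hw
    rw [mem_insert, not_or] at hw
    by_cases huw : G.Adj u w
    · exact ⟨u, mem_insert_self u T, huw⟩
    · obtain ⟨t, ht, hadj⟩ := h w ⟨hw.1, huw⟩ hw.2
      exact ⟨t, mem_insert_of_mem ht, hadj⟩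

theorem dominatesOn_univ_iff_of_notMem (hu : u ∉ S) :
    G.DominatesOn S Set.univ ↔
      G.DominatesOn S {u}ᶜ ∧ ¬ ↑S ⊆ G.closedNbhdCompl u := by
  constructor
  · intro h
    refine ⟨fun w _ hw => h w trivial hw, fun hS => ?_⟩
    obtain ⟨t, ht, hadj⟩ := h u trivial hu
    exact (hS ht).2 hadj.symm
  · rintro ⟨h, hS⟩ w - hw
    by_cases hwu : w = u
    · subst hwu
      obtain ⟨x, hx, hxu⟩ := Set.not_subset.1 hS
      refine ⟨x, hx, ?_⟩
      by_contra hadj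
      exact hxu ⟨fun h => hu (h ▸ hx), fun h => hadj h.symm⟩
    · exact h w hwu hw

theorem completeNbhd_dominatesOn_compl_iff (hS : ¬ ↑S ⊆ G.closedNbhdCompl u) :
    (G.completeNbhd u).DominatesOn S {u}ᶜ ↔ G.DominatesOn S (G.closedNbhdCompl u) := by
  constructor
  · rintro h w ⟨hwu, huw⟩ hw
    obtain ⟨t, ht, hadj⟩ := h w hwu hw
    refine ⟨t, ht, ?_⟩
    rcases completeNbhd_adj.1 hadj with ⟨-, hadj | ⟨-, huw'⟩⟩
    exacts [hadj, (huw huw').elim]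
  · intro h w hwu hw
    by_cases huw : G.Adj u w
    · obtain ⟨x, hx, hxu⟩ := Set.not_subset.1 hS
      refine ⟨x, hx, completeNbhd_adj.2 ⟨fun h => hw (h ▸ hx), ?_⟩⟩
      by_cases hx' : x = u
      · exact Or.inl (hx' ▸ huw)
      · exact Or.inr ⟨not_not.1 fun h => hxu ⟨hx', h⟩, huw⟩
    · exact (h w ⟨hwu, huw⟩ hw).imp fun _ ⟨ht, hadj⟩ => ⟨ht, le_completeNbhd hadj⟩

theorem dominatesOn_univ_not_deleteEdges_iff (huv : G.Adj u v) {S : Finset V} :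
    v ∈ S ∧ G.DominatesOn S Set.univ ∧ ¬ (G.deleteEdges {s(u, v)}).DominatesOn S Set.univ ↔
      ↑S ⊆ (G.deleteEdges {s(u, v)}).closedNbhdCompl u ∧
        (G.deleteEdges {s(u, v)}).DominatesOn S {u}ᶜ ∧ ¬ ↑S ⊆ G.closedNbhdCompl u := by
  have hadj {a b : V} : (G.deleteEdges {s(u, v)}).Adj a b ↔
      G.Adj a b ∧ ¬ (a = u ∧ b = v) ∧ ¬ (a = v ∧ b = u) := by
    rw [deleteEdges_adj, Set.mem_singleton_iff, Sym2.eq_iff]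
    tauto
  constructor
  · rintro ⟨hv, hdom, hnot⟩
    unfold DominatesOn at hnot
    push Not at hnot
    obtain ⟨w, -, hwS, hw⟩ := hnot
    obtain ⟨t, ht, htw⟩ := hdom w trivial hwS
    have hwu : w = u := by
      by_contra hwu
      exact hw t ht (hadj.2 ⟨htw, fun h => hwS (h.2 ▸ hv), fun h => hwu h.2⟩)
    subst hwu
    refine ⟨fun x hx => ⟨fun h => hwS (h ▸ hx), fun h => hw x hx h.symm⟩, ?_, ?_⟩
    · intro w' hw' hw'S
      obtain ⟨t', ht', h'⟩ := hdom w' trivial hw'S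
      exact ⟨t', ht', hadj.2 ⟨h', fun h => hwS (h.1 ▸ ht'), fun h => hw' h.2⟩⟩
    · exact fun hS => (hS hv).2 huv
  · rintro ⟨hS', hdom', hmeet⟩
    have hu : u ∉ S := fun h => (hS' h).1 rfl
    have hv : v ∈ S := by
      obtain ⟨x, hx, hxu⟩ := Set.not_subset.1 hmeet
      have hux : G.Adj u x := not_not.1 fun h => hxu ⟨(hS' hx).1, h⟩
      by_contra hv
      exact (hS' hx).2 (hadj.2 ⟨hux, fun h => hv (h.2 ▸ hx), fun h => G.ne_of_adj huv h.1⟩)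
    refine ⟨hv, fun w _ hwS => ?_, fun h => ?_⟩
    · by_cases hwu : w = u
      · exact ⟨v, hv, hwu ▸ huv.symm⟩
      · obtain ⟨t, ht, h⟩ := hdom' w hwu hwS
        exact ⟨t, ht, (hadj.1 h).1⟩
    · obtain ⟨t, ht, htu⟩ := h u trivial hu
      exact (hS' ht).2 htu.symm

section Finite

variable [Fintype V]

/-- `relDomPoly G {u}ᶜ {u}ᶜ` is `D(G − u)`, and `relDomPoly G (G.closedNbhdCompl u) {u}ᶜ` is
the polynomial `p_u(G)` of the dominating sets of `G − u` that contain no neighbour of `u`. -/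
noncomputable def relDomPoly (G : SimpleGraph V) (A B : Set V) : ℂ[X] :=
  cardPoly fun S => ↑S ⊆ A ∧ G.DominatesOn S B

theorem domPoly_eq_cardPoly (G : SimpleGraph V) :
    domPoly G = cardPoly (G.DominatesOn · Set.univ) :=
  cardPoly_congr fun _ => isDomSet_iff_dominatesOn_univ

theorem relDomPoly_congr (h : ∀ a ∈ A, ∀ b ∈ B, G.Adj a b ↔ H.Adj a b) :
    relDomPoly G A B = relDomPoly H A B := by
  refine cardPoly_congr fun S => and_congr_right fun hS => ?_
  refine forall₂_congr fun w hw => imp_congr_right fun _ => ?_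
  exact exists_congr fun t => and_congr_right fun ht => h t (hS ht) w hw

theorem relDomPoly_eq_add_of_subset (hA : A ⊆ A') :
    relDomPoly G A' B =
      cardPoly (fun S => ↑S ⊆ A' ∧ G.DominatesOn S B ∧ ¬ ↑S ⊆ A)
        + relDomPoly G A B := by
  rw [relDomPoly, relDomPoly, ← cardPoly_and_add_not_and (fun S => ¬ ↑S ⊆ A)]
  congr 1
  · exact cardPoly_congr fun S => by tauto
  · exact cardPoly_congr fun S => ⟨fun ⟨h, _, hB⟩ => ⟨not_not.1 h, hB⟩,
      fun ⟨h, hB⟩ => ⟨not_not.2 h, h.trans hA, hB⟩⟩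

theorem relDomPoly_deleteEdges_of_notMem (hA : u ∉ A) (hB : u ∉ B) :
    relDomPoly (G.deleteEdges {s(u, v)}) A B = relDomPoly G A B := by
  refine relDomPoly_congr fun a ha b hb => ?_
  rw [deleteEdges_adj, Set.mem_singleton_iff, Sym2.eq_iff, and_iff_left_iff_imp]
  rintro - (⟨rfl, -⟩ | ⟨-, rfl⟩)
  exacts [hA ha, hB hb]

theorem domPoly_comap_subtypeVal (G : SimpleGraph V) (P : V → Prop) [Fintype {x // P x}] :
    domPoly (G.comap (Subtype.val : {x // P x} → V)) = relDomPoly G {x | P x} {x | P x} := by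
  classical
  rw [domPoly, relDomPoly, cardPoly]
  refine sum_nbij' (fun S => S.map (Function.Embedding.subtype P)) (fun S => S.subtype P)
    ?_ ?_ ?_ ?_ ?_
  all_goals simp only [mem_filter, mem_univ, true_and]
  · intro S hS
    refine ⟨fun x hx => ?_, fun w hw hwS => ?_⟩
    · obtain ⟨a, -, rfl⟩ := mem_map.1 hx
      exact a.2
    · rcases hS ⟨w, hw⟩ with h | ⟨t, ht, hadj⟩
      · exact (hwS (mem_map_of_mem _ h)).elim
      · exact ⟨t, mem_map_of_mem _ ht, hadj⟩
  · rintro S ⟨hSP, hS⟩ w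
    rw [or_iff_not_imp_left]
    intro hw
    obtain ⟨t, ht, hadj⟩ := hS w w.2 fun h => hw (mem_subtype.2 h)
    exact ⟨⟨t, hSP ht⟩, mem_subtype.2 ht, hadj⟩
  · intro S _
    ext a
    simp [a.2]
  · rintro S ⟨hSP, -⟩
    exact (subtype_map P).trans (filter_true_of_mem fun x hx => hSP hx)
  · intro S _
    rw [card_map]

theorem domPoly_eq_relDomPoly_vertex [DecidableEq V] (G : SimpleGraph V) (u : V) :
    domPoly G = X * relDomPoly G {u}ᶜ (G.closedNbhdCompl u) + relDomPoly G {u}ᶜ {u}ᶜ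
      - relDomPoly G (G.closedNbhdCompl u) {u}ᶜ := by
  rw [relDomPoly_eq_add_of_subset (B := {u}ᶜ) closedNbhdCompl_subset_compl, domPoly_eq_cardPoly,
    ← cardPoly_and_add_not_and (u ∈ ·), cardPoly_mem_and, relDomPoly]
  simp only [Set.subset_compl_singleton_iff, mem_coe]
  rw [cardPoly_congr fun S => and_congr_right fun _ => dominatesOn_insert_univ_iff,
    cardPoly_congr fun S => and_congr_right dominatesOn_univ_iff_of_notMem]
  ring

theorem domPoly_contractVert_eq (G : SimpleGraph V) (u : V) [Fintype {w // w ≠ u}] :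
    domPoly (G.contractVert u) = relDomPoly G {u}ᶜ (G.closedNbhdCompl u)
      - relDomPoly G (G.closedNbhdCompl u) (G.closedNbhdCompl u)
      + relDomPoly G (G.closedNbhdCompl u) {u}ᶜ := by
  have hsub : G.closedNbhdCompl u ⊆ {u}ᶜ := closedNbhdCompl_subset_compl
  rw [contractVert_eq_comap, domPoly_comap_subtypeVal, ← Set.compl_singleton_eq,
    relDomPoly_eq_add_of_subset (G := G.completeNbhd u) hsub,
    relDomPoly_eq_add_of_subset (G := G) (B := G.closedNbhdCompl u) hsub,
    relDomPoly_congr fun a ha b _ => completeNbhd_adj_of_not_adj ha.2,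
    cardPoly_congr fun S => and_congr_right fun _ =>
      and_congr_left completeNbhd_dominatesOn_compl_iff]
  ring

theorem domPoly_deleteClosedNbhd (G : SimpleGraph V) (u : V)
    [Fintype {w // w ≠ u ∧ ¬ G.Adj u w}] :
    domPoly (G.deleteClosedNbhd u) =
      relDomPoly G (G.closedNbhdCompl u) (G.closedNbhdCompl u) :=
  domPoly_comap_subtypeVal G _

theorem domPoly_contractVert_recurrence (G : SimpleGraph V) (u : V) [Fintype {w // w ≠ u}]
    [Fintype {w // w ≠ u ∧ ¬ G.Adj u w}] :
    domPoly G = X * domPoly (G.contractVert u) + relDomPoly G {u}ᶜ {u}ᶜ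
      + X * domPoly (G.deleteClosedNbhd u)
      - (1 + X) * relDomPoly G (G.closedNbhdCompl u) {u}ᶜ := by
  classical
  rw [domPoly_eq_relDomPoly_vertex G u, domPoly_contractVert_eq, domPoly_deleteClosedNbhd]
  ring

theorem cardPoly_dominatesOn_not_deleteEdges (huv : G.Adj u v) :
    cardPoly (fun S => v ∈ S ∧ G.DominatesOn S Set.univ ∧
        ¬ (G.deleteEdges {s(u, v)}).DominatesOn S Set.univ) =
      relDomPoly (G.deleteEdges {s(u, v)}) ((G.deleteEdges {s(u, v)}).closedNbhdCompl u) {u}ᶜ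
        - relDomPoly G (G.closedNbhdCompl u) {u}ᶜ := by
  rw [cardPoly_congr fun S => dominatesOn_univ_not_deleteEdges_iff huv,
    relDomPoly_eq_add_of_subset (closedNbhdCompl_anti (deleteEdges_le _)),
    relDomPoly_deleteEdges_of_notMem (A := G.closedNbhdCompl u) (B := {u}ᶜ)
      (fun h => h.1 rfl) (fun h => h rfl)]
  ring

theorem domPoly_eq_deleteEdges_add (huv : G.Adj u v) :
    domPoly G = domPoly (G.deleteEdges {s(u, v)})
      + (relDomPoly (G.deleteEdges {s(u, v)}) ((G.deleteEdges {s(u, v)}).closedNbhdCompl u) {u}ᶜ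
        - relDomPoly G (G.closedNbhdCompl u) {u}ᶜ)
      + (relDomPoly (G.deleteEdges {s(u, v)}) ((G.deleteEdges {s(u, v)}).closedNbhdCompl v) {v}ᶜ
        - relDomPoly G (G.closedNbhdCompl v) {v}ᶜ) := by
  have hsw : G.deleteEdges {s(v, u)} = G.deleteEdges {s(u, v)} := by rw [Sym2.eq_swap]
  have hu := cardPoly_dominatesOn_not_deleteEdges huv.symm
  rw [hsw] at hu
  rw [← cardPoly_dominatesOn_not_deleteEdges huv, ← hu, domPoly_eq_cardPoly,
    domPoly_eq_cardPoly, add_assoc,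
    ← cardPoly_and_add_not_and ((G.deleteEdges {s(u, v)}).DominatesOn · Set.univ)]
  congr 1
  · exact cardPoly_congr fun S => ⟨fun h => h.1, fun h => ⟨h, h.mono (deleteEdges_le _)⟩⟩
  rw [← cardPoly_and_add_not_and (v ∈ ·)]
  congr 1
  · exact cardPoly_congr fun S => and_congr_right fun _ => and_comm
  refine cardPoly_congr fun S =>
    ⟨fun ⟨hv, hn, hd⟩ => ⟨?_, hd, hn⟩, fun ⟨hu, hd, hn⟩ => ⟨?_, hn, hd⟩⟩
  · by_contra hu
    exact hn (hd.deleteEdges_of_mem_iff (iff_of_false hu hv))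
  · exact fun hv => hn (hd.deleteEdges_of_mem_iff (iff_of_true hu hv))

end Finite

end SimpleGraph

open Classical in
/-- Edge reduction formula.  For an edge `e = {u,v}` of `G`,
`D(G,x) = D(G−e,x) + x/(x−1)·[D(G−e/u,x) + D(G−e/v,x) − D(G/u,x) − D(G/v,x)
 − D(G−N[u],x) − D(G−N[v],x) + D(G−e−N[u],x) + D(G−e−N[v],x)]`,
stated equivalently as the polynomial identity obtained by multiplying through
by `x − 1`. -/
theorem domPoly_edge_reduction {V : Type*} [Fintype V] (G : SimpleGraph V) (u v : V)
    (huv : G.Adj u v) :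
    (X - 1) * (domPoly G - domPoly (G.deleteEdges {s(u, v)})) =
      X * (domPoly ((G.deleteEdges {s(u, v)}).contractVert u)
        + domPoly ((G.deleteEdges {s(u, v)}).contractVert v)
        - domPoly (G.contractVert u) - domPoly (G.contractVert v)
        - domPoly (G.deleteClosedNbhd u) - domPoly (G.deleteClosedNbhd v)
        + domPoly ((G.deleteEdges {s(u, v)}).deleteClosedNbhd u)
        + domPoly ((G.deleteEdges {s(u, v)}).deleteClosedNbhd v)) := by
  have hsw : G.deleteEdges {s(v, u)} = G.deleteEdges {s(u, v)} := by rw [Sym2.eq_swap]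
  have hu := G.domPoly_contractVert_recurrence u
  have hv := G.domPoly_contractVert_recurrence v
  have hu' := (G.deleteEdges {s(u, v)}).domPoly_contractVert_recurrence u
  have hv' := (G.deleteEdges {s(u, v)}).domPoly_contractVert_recurrence v
  have hRu : (G.deleteEdges {s(u, v)}).relDomPoly {u}ᶜ {u}ᶜ = G.relDomPoly {u}ᶜ {u}ᶜ :=
    SimpleGraph.relDomPoly_deleteEdges_of_notMem (fun h => h rfl) (fun h => h rfl)
  have hRv : (G.deleteEdges {s(u, v)}).relDomPoly {v}ᶜ {v}ᶜ = G.relDomPoly {v}ᶜ {v}ᶜ :=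
    hsw ▸ SimpleGraph.relDomPoly_deleteEdges_of_notMem (fun h => h rfl) (fun h => h rfl)
  linear_combination (1 + X) * SimpleGraph.domPoly_eq_deleteEdges_add huv
    - hu + hu' - hv + hv' + hRu + hRv
end

section
/- Let G be a finite simple graph on 2n vertices. Then D(G,x) = (x^2+2x)^n if and only if G is isomorphic to H∘K_1 for some graph H of order n. -/
open Polynomial

/-- The corona `H ∘ K₁`: attach a pendant vertex `(w, true)` to each vertex
`(w, false)` of `H`. -/
def coronaK1 {W : Type*} (H : SimpleGraph W) : SimpleGraph (W × Bool) :=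
  SimpleGraph.fromRel (fun a b =>
    (a.2 = false ∧ b.2 = false ∧ H.Adj a.1 b.1) ∨
    (a.1 = b.1 ∧ a.2 = false ∧ b.2 = true))

/-!
A set dominates `H ∘ K₁` iff it meets every pair formed by a vertex of `H` and its pendant
vertex, so `D(H ∘ K₁, x) = (x² + 2x)^|H|`.

Conversely, read off three coefficients of `(x² + 2x)ⁿ`. The coefficient of `xⁿ⁻¹` vanishes, so
every dominating set has at least `n` vertices. The coefficient of `x²ⁿ⁻¹` is `2n`, so every set
of `2n - 1` vertices dominates and `G` has no isolated vertex. The non-dominating sets of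
`2n - 2` vertices are then exactly the complements of the pairs `{ℓ, s}` with `ℓ` a leaf and
`s` its neighbour, and the coefficient of `x²ⁿ⁻²` shows that there are `n` such pairs. Two of
them can only meet if two leaves share their neighbour; deleting one of these leaves and applying
Ore's argument (the complement of a minimum dominating set of a graph without isolated vertices
dominates too) then gives a dominating set of fewer than `n` vertices. Hence the `n` pairs
partition the vertices, which is the corona structure.
-/

open Finset

universe u

theorem Nat.choose_two_mul_two (n : ℕ) : (2 * n).choose 2 = 4 * n.choose 2 + n := by
  have h : ((2 * n).choose 2 : ℚ) = 4 * n.choose 2 + n := by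
    rw [Nat.cast_choose_two, Nat.cast_choose_two]
    push_cast
    ring
  exact_mod_cast h

theorem coeff_X_sq_add_two_mul_X_pow {R : Type*} [CommSemiring R] {n i j : ℕ}
    (h : i + j = 2 * n) : ((X ^ 2 + 2 * X : R[X]) ^ n).coeff i = 2 ^ j * n.choose j := by
  have hfac : (X ^ 2 + 2 * X : R[X]) ^ n = X ^ n * (X + C 2) ^ n := by
    rw [← mul_pow, C_ofNat]
    ring
  rw [hfac, coeff_X_pow_mul']
  split_ifs with hni
  · rw [coeff_X_add_C_pow, Nat.choose_symm_of_eq_add (by omega : n = (i - n) + j)]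
    congr 2
    omega
  · rw [Nat.choose_eq_zero_of_lt (by omega), Nat.cast_zero, mul_zero]

def finsetProdEquivPi (α β : Type*) [Fintype α] [Fintype β] [DecidableEq α] [DecidableEq β] :
    Finset (α × β) ≃ (α → Finset β) where
  toFun S a := {b | (a, b) ∈ S}
  invFun g := {p | p.2 ∈ g p.1}
  left_inv S := by ext; simp
  right_inv g := by ext; simp

theorem card_finsetProdEquivPi_symm {α β : Type*} [Fintype α] [Fintype β] [DecidableEq α]
    [DecidableEq β] (g : α → Finset β) : #((finsetProdEquivPi α β).symm g) = ∑ a, #(g a) := by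
  simp only [finsetProdEquivPi, Equiv.coe_fn_symm_mk, card_filter, Fintype.sum_prod_type]
  simp

namespace SimpleGraph

variable {V : Type u} {G : SimpleGraph V}

theorem IsDomSet.mono {S T : Finset V} (hS : G.IsDomSet S) (h : S ⊆ T) : G.IsDomSet T :=
  fun v => (hS v).imp (fun hv => h hv) fun ⟨u, hu, huv⟩ => ⟨u, h hu, huv⟩

theorem Iso.isDomSet_map_iff {V' : Type*} {G' : SimpleGraph V'} (e : G ≃g G') (S : Finset V) :
    G'.IsDomSet (S.map e.toEquiv.toEmbedding) ↔ G.IsDomSet S := by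
  simp only [IsDomSet, e.toEquiv.forall_congr_left, mem_map_equiv]
  exact forall_congr' fun v => or_congr_right
    ⟨fun ⟨u, hu, huv⟩ => ⟨_, hu, e.symm.map_adj_iff.2 huv⟩,
      fun ⟨u, hu, huv⟩ => ⟨e u, (e.toEquiv.symm_apply_apply u).symm ▸ hu,
        e.toEquiv.apply_symm_apply v ▸ e.map_adj_iff.2 huv⟩⟩

theorem Iso.domPoly_eq [Fintype V] {V' : Type*} [Fintype V'] {G' : SimpleGraph V'}
    (e : G ≃g G') : domPoly G = domPoly G' :=
  sum_equiv e.toEquiv.finsetCongr (fun S => by simp [e.isDomSet_map_iff]) fun S _ => by simp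

def Dominates (G : SimpleGraph V) (D U : Finset V) : Prop :=
  ∀ v ∈ U, v ∈ D ∨ ∃ u ∈ D, G.Adj u v

theorem Dominates.sdiff [DecidableEq V] {D U : Finset V} (hU : ∀ v ∈ U, ∃ u ∈ U, G.Adj u v)
    (hD : G.Dominates D U) (hmin : ∀ v ∈ D, ¬ G.Dominates (D.erase v) U) :
    G.Dominates (U \ D) U := by
  intro v hvU
  by_cases hvD : v ∈ D
  swap
  · exact Or.inl (mem_sdiff.2 ⟨hvU, hvD⟩)
  right
  by_contra! hpriv
  refine hmin v hvD fun x hxU => ?_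
  obtain rfl | hxv := eq_or_ne x v
  · obtain ⟨w, hwU, hwx⟩ := hU x hxU
    have hwD : w ∈ D := by
      by_contra hwD
      exact hpriv w (mem_sdiff.2 ⟨hwU, hwD⟩) hwx
    exact Or.inr ⟨w, mem_erase.2 ⟨hwx.ne, hwD⟩, hwx⟩
  by_cases hxD : x ∈ D
  · exact Or.inl (mem_erase.2 ⟨hxv, hxD⟩)
  obtain ⟨u, huD, hux⟩ := (hD x hxU).resolve_left hxD
  have huv : u ≠ v := by
    rintro rfl
    exact hpriv x (mem_sdiff.2 ⟨hxU, hxD⟩) hux.symm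
  exact Or.inr ⟨u, mem_erase.2 ⟨huv, huD⟩, hux⟩

theorem exists_dominates_two_mul_card_le {U : Finset V} (hU : ∀ v ∈ U, ∃ u ∈ U, G.Adj u v) :
    ∃ D ⊆ U, G.Dominates D U ∧ 2 * #D ≤ #U := by
  classical
  obtain ⟨D, hD, hmin⟩ := {D ∈ U.powerset | G.Dominates D U}.exists_min_image card
    ⟨U, mem_filter.2 ⟨mem_powerset_self U, fun v hv => Or.inl hv⟩⟩
  simp only [mem_filter, mem_powerset, and_imp] at hD hmin
  obtain ⟨hDU, hD⟩ := hD
  have hsdiff := hD.sdiff hU fun v hv hdom => by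
    have := hmin _ ((erase_subset v D).trans hDU) hdom
    rw [card_erase_of_mem hv] at this
    have := card_pos.2 ⟨v, hv⟩
    omega
  have := hmin _ sdiff_subset hsdiff
  rw [card_sdiff_of_subset hDU] at this
  exact ⟨D, hDU, hD, by have := card_le_card hDU; omega⟩

theorem exists_isDomSet_two_mul_card_lt [Fintype V] {ℓ₁ ℓ₂ s : V}
    (h₁ : G.neighborSet ℓ₁ = {s}) (h₂ : G.neighborSet ℓ₂ = {s}) (hne : ℓ₁ ≠ ℓ₂)
    (hδ : ∀ v, ∃ u, G.Adj u v) : ∃ D, G.IsDomSet D ∧ 2 * #D < Fintype.card V := by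
  classical
  have hadj₁ (u : V) : G.Adj ℓ₁ u ↔ u = s := Set.ext_iff.1 h₁ u
  have hadj₂ (u : V) : G.Adj ℓ₂ u ↔ u = s := Set.ext_iff.1 h₂ u
  have hs₁ : G.Adj s ℓ₁ := ((hadj₁ s).2 rfl).symm
  have hs₂ : G.Adj s ℓ₂ := ((hadj₂ s).2 rfl).symm
  obtain ⟨D, -, hD, hcard⟩ := exists_dominates_two_mul_card_le (G := G) (U := univ.erase ℓ₂)
    fun v _ => by
      obtain ⟨u, hu⟩ := hδ v
      obtain rfl | hu₂ := eq_or_ne u ℓ₂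
      · obtain rfl := (hadj₂ v).1 hu
        exact ⟨ℓ₁, mem_erase.2 ⟨hne, mem_univ _⟩, hs₁.symm⟩
      · exact ⟨u, mem_erase.2 ⟨hu₂, mem_univ _⟩, hu⟩
  -- `ℓ₁` can only be dominated by itself or by `s`, so trading `ℓ₁` for `s` does not enlarge `D`
  have hℓ₁s : ℓ₁ ∈ D ∨ s ∈ D := by
    rcases hD ℓ₁ (mem_erase.2 ⟨hne, mem_univ _⟩) with h | ⟨u, hu, huℓ⟩
    · exact Or.inl h
    · exact Or.inr ((hadj₁ u).1 huℓ.symm ▸ hu)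
  refine ⟨insert s (D.erase ℓ₁), fun v => ?_, ?_⟩
  · by_cases hv : v = ℓ₁ ∨ v = ℓ₂
    · exact Or.inr ⟨s, mem_insert_self _ _, by rcases hv with rfl | rfl <;> assumption⟩
    push Not at hv
    rcases hD v (mem_erase.2 ⟨hv.2, mem_univ _⟩) with h | ⟨u, hu, huv⟩
    · exact Or.inl (mem_insert_of_mem (mem_erase.2 ⟨hv.1, h⟩))
    obtain rfl | hu₁ := eq_or_ne u ℓ₁
    · exact Or.inl ((hadj₁ v).1 huv ▸ mem_insert_self _ _)
    · exact Or.inr ⟨u, mem_insert_of_mem (mem_erase.2 ⟨hu₁, hu⟩), huv⟩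
  · have hD' : #(insert s (D.erase ℓ₁)) ≤ #D := by
      rcases hℓ₁s with h | h
      · have := card_pos.2 ⟨_, h⟩
        have := card_insert_le s (D.erase ℓ₁)
        rw [card_erase_of_mem h] at this
        omega
      · rw [insert_eq_of_mem (mem_erase.2 ⟨hs₁.ne, h⟩)]
        exact card_erase_le
    rw [card_erase_of_mem (mem_univ _), card_univ] at hcard
    have := Fintype.card_pos_iff.2 ⟨s⟩
    omega

open Classical in
noncomputable def domCount [Fintype V] (G : SimpleGraph V) (i : ℕ) : ℕ :=
  #{S ∈ powersetCard i univ | G.IsDomSet S}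

theorem coeff_domPoly [Fintype V] (G : SimpleGraph V) (i : ℕ) :
    (domPoly G).coeff i = G.domCount i := by
  classical
  simp only [domPoly, finsetSum_coeff, coeff_X_pow, sum_boole, domCount, powersetCard_eq_filter,
    powerset_univ, filter_filter]
  congr 2
  ext S
  simp [and_comm, eq_comm]

theorem domCount_eq_of_domPoly_eq [Fintype V] {n : ℕ} (h : domPoly G = (X ^ 2 + 2 * X) ^ n)
    {i j : ℕ} (hij : i + j = 2 * n) : G.domCount i = 2 ^ j * n.choose j := by
  have := coeff_domPoly G i
  rw [h, coeff_X_sq_add_two_mul_X_pow hij] at this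
  exact_mod_cast this.symm

theorem lt_card_of_domCount_eq_zero [Fintype V] {i : ℕ} (h : G.domCount i = 0)
    (hi : i ≤ Fintype.card V) {D : Finset V} (hD : G.IsDomSet D) : i < #D := by
  classical
  by_contra! hDi
  obtain ⟨T, hDT, -, hT⟩ := exists_subsuperset_card_eq (subset_univ D) hDi (by rwa [card_univ])
  rw [domCount, card_eq_zero, filter_eq_empty_iff] at h
  exact h (mem_powersetCard.2 ⟨subset_univ T, hT⟩) (hD.mono hDT)

theorem exists_adj_of_domCount_eq [Fintype V] {i : ℕ} (hi : i + 1 = Fintype.card V)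
    (h : G.domCount i = Fintype.card V) (v : V) : ∃ u, G.Adj u v := by
  classical
  have hall : ∀ S ∈ powersetCard i univ, G.IsDomSet S := filter_card_eq (by
    rw [card_powersetCard, card_univ, ← hi, Nat.choose_succ_self_right, hi, ← h, domCount])
  have hcard : #(univ.erase v) = i := by rw [card_erase_of_mem (mem_univ v), card_univ]; omega
  obtain hv | ⟨u, -, hu⟩ := hall _ (mem_powersetCard.2 ⟨subset_univ _, hcard⟩) v
  · exact absurd hv (notMem_erase v univ)
  · exact ⟨u, hu⟩

open Classical in
noncomputable def pendantPairs [Fintype V] [DecidableEq V] (G : SimpleGraph V) :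
    Finset (Finset V) :=
  {P | ∃ ℓ s, G.neighborSet ℓ = {s} ∧ P = {ℓ, s}}

theorem mem_pendantPairs [Fintype V] [DecidableEq V] {P : Finset V} :
    P ∈ G.pendantPairs ↔ ∃ ℓ s, G.neighborSet ℓ = {s} ∧ P = {ℓ, s} := by
  simp [pendantPairs]

theorem card_eq_two_of_mem_pendantPairs [Fintype V] [DecidableEq V] {P : Finset V}
    (hP : P ∈ G.pendantPairs) : #P = 2 := by
  obtain ⟨ℓ, s, h, rfl⟩ := mem_pendantPairs.1 hP
  exact card_pair (G.ne_of_adj (h.symm ▸ Set.mem_singleton s : s ∈ G.neighborSet ℓ))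

theorem not_isDomSet_compl_iff [Fintype V] [DecidableEq V] (hδ : ∀ v, ∃ u, G.Adj u v)
    {T : Finset V} (hT : #T = 2) : ¬ G.IsDomSet Tᶜ ↔ T ∈ G.pendantPairs := by
  constructor
  · intro h
    simp only [IsDomSet, mem_compl, not_forall, not_or, not_not, not_exists, not_and] at h
    obtain ⟨v, hvT, hv⟩ := h
    have hN (u : V) (huv : G.Adj v u) : u ∈ T := by
      by_contra hu
      exact hv u hu huv.symm
    obtain ⟨u, hu⟩ := hδ v
    have hTvu : T = {v, u} := (eq_of_subset_of_card_le
      (insert_subset hvT (singleton_subset_iff.2 (hN u hu.symm)))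
      (by rw [hT, card_pair hu.ne'])).symm
    refine mem_pendantPairs.2 ⟨v, u, Set.ext fun w => ⟨fun hw => ?_, ?_⟩, hTvu⟩
    · have := hN w hw
      rw [hTvu, mem_insert, mem_singleton] at this
      exact this.resolve_left hw.ne'
    · rintro rfl
      exact hu.symm
  · intro hT hdom
    obtain ⟨ℓ, s, h, rfl⟩ := mem_pendantPairs.1 hT
    obtain hℓ | ⟨u, hu, huℓ⟩ := hdom ℓ
    · exact mem_compl.1 hℓ (mem_insert_self _ _)
    · obtain rfl : u = s := Set.ext_iff.1 h u |>.1 huℓ.symm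
      exact mem_compl.1 hu (mem_insert_of_mem (mem_singleton_self _))

theorem domCount_add_card_pendantPairs [Fintype V] [DecidableEq V] (hδ : ∀ v, ∃ u, G.Adj u v)
    {i : ℕ} (hi : i + 2 = Fintype.card V) :
    G.domCount i + #G.pendantPairs = (Fintype.card V).choose 2 := by
  classical
  have hnondom : #{S ∈ powersetCard i univ | ¬ G.IsDomSet S} = #G.pendantPairs := by
    refine card_nbij' compl compl (fun S hS => ?_) (fun P hP => ?_) (fun S _ => compl_compl S)
      (fun P _ => compl_compl P)
    · simp only [coe_filter, mem_powersetCard, subset_univ, true_and] at hS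
      rw [mem_coe, ← not_isDomSet_compl_iff hδ, compl_compl]
      · exact hS.2
      · rw [card_compl, hS.1]; omega
    · rw [mem_coe] at hP
      have h2 := card_eq_two_of_mem_pendantPairs hP
      simp only [coe_filter, mem_powersetCard, subset_univ, true_and]
      exact ⟨by rw [card_compl, h2]; omega, (not_isDomSet_compl_iff hδ h2).2 hP⟩
  rw [domCount, ← hnondom, card_filter_add_card_filter_not, card_powersetCard, card_univ,
    Nat.choose_symm_of_eq_add hi.symm]

theorem eq_of_mem_pendantPairs [Fintype V] [DecidableEq V]
    (hsupp : ∀ ℓ₁ ℓ₂ s, G.neighborSet ℓ₁ = {s} → G.neighborSet ℓ₂ = {s} → ℓ₁ = ℓ₂)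
    {P Q : Finset V} {x : V} (hP : P ∈ G.pendantPairs) (hQ : Q ∈ G.pendantPairs) (hxP : x ∈ P)
    (hxQ : x ∈ Q) : P = Q := by
  -- a leaf that is the neighbour of another leaf spans a component `K₂` with it
  have hK₂ {ℓ s ℓ' s' : V} (h : G.neighborSet ℓ = {s}) (h' : G.neighborSet ℓ' = {s'})
      (hℓ : ℓ = s') : ({ℓ, s} : Finset V) = {ℓ', s'} := by
    subst hℓ
    obtain rfl : ℓ' = s := Set.ext_iff.1 h ℓ' |>.1 (Set.ext_iff.1 h' ℓ |>.2 rfl).symm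
    exact pair_comm _ _
  obtain ⟨ℓ₁, s₁, h₁, rfl⟩ := mem_pendantPairs.1 hP
  obtain ⟨ℓ₂, s₂, h₂, rfl⟩ := mem_pendantPairs.1 hQ
  simp only [mem_insert, mem_singleton] at hxP hxQ
  obtain rfl | rfl := hxP <;> obtain h | h := hxQ
  · subst h
    rw [Set.singleton_eq_singleton_iff.1 (h₁.symm.trans h₂)]
  · exact hK₂ h₁ h₂ h
  · exact (hK₂ h₂ h₁ h.symm).symm
  · subst h
    rw [hsupp _ _ _ h₁ h₂]

end SimpleGraph

section Corona

variable {W : Type*} (H : SimpleGraph W)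

@[simp]
theorem coronaK1_adj {a b : W} {x y : Bool} :
    (coronaK1 H).Adj (a, x) (b, y) ↔ x = false ∧ y = false ∧ H.Adj a b ∨ a = b ∧ x ≠ y := by
  cases x <;> cases y <;> simp [coronaK1, H.adj_comm b a]
  · exact H.ne_of_adj
  · exact eq_comm

theorem isDomSet_coronaK1_iff {S : Finset (W × Bool)} :
    (coronaK1 H).IsDomSet S ↔ ∀ w, ∃ b, (w, b) ∈ S := by
  refine ⟨fun h w => ?_, fun h ⟨w, b⟩ => ?_⟩
  · obtain hw | ⟨⟨a, x⟩, hu, hadj⟩ := h (w, true)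
    · exact ⟨true, hw⟩
    · obtain ⟨rfl, -⟩ := ((coronaK1_adj H).1 hadj).resolve_left (by simp)
      exact ⟨x, hu⟩
  · obtain ⟨c, hc⟩ := h w
    obtain rfl | hcb := eq_or_ne c b
    · exact Or.inl hc
    · exact Or.inr ⟨(w, c), hc, by simp [hcb]⟩

theorem domPoly_coronaK1 [Fintype W] :
    domPoly (coronaK1 H) = (X ^ 2 + 2 * X) ^ Fintype.card W := by
  classical
  have hK₂ : ∑ t : Finset Bool, (if t.Nonempty then (X : ℂ[X]) ^ #t else 0) = X ^ 2 + 2 * X := by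
    rw [show (univ : Finset (Finset Bool)) = {∅, {false}, {true}, univ} by decide,
      sum_insert (by decide), sum_insert (by decide), sum_insert (by decide), sum_singleton]
    simp
    ring
  calc domPoly (coronaK1 H)
      = ∑ g : W → Finset Bool, ∏ w, (if (g w).Nonempty then (X : ℂ[X]) ^ #(g w) else 0) := by
        rw [domPoly, sum_filter, ← (finsetProdEquivPi W Bool).symm.sum_comp]
        refine sum_congr rfl fun g _ => ?_
        rw [prod_ite_zero, prod_pow_eq_pow_sum, ← card_finsetProdEquivPi_symm]
        simp [isDomSet_coronaK1_iff, finsetProdEquivPi, Finset.Nonempty]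
    _ = ∏ _w : W, ∑ t : Finset Bool, (if t.Nonempty then (X : ℂ[X]) ^ #t else 0) := by
        rw [Fintype.prod_sum]
    _ = (X ^ 2 + 2 * X) ^ Fintype.card W := by rw [hK₂, prod_const, card_univ]

theorem nonempty_iso_coronaK1 {V : Type*} {G : SimpleGraph V} (e : W × Bool ≃ V)
    (hpend : ∀ w u, G.Adj u (e (w, true)) ↔ u = e (w, false)) :
    Nonempty (G ≃g coronaK1 (G.comap fun w => e (w, false))) := by
  refine ⟨RelIso.symm ⟨e, fun {p q} => ?_⟩⟩
  obtain ⟨a, x⟩ := p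
  obtain ⟨b, y⟩ := q
  cases x <;> cases y <;> simp [hpend, G.adj_comm (e (a, true)), e.injective.eq_iff]
  exact eq_comm

end Corona

namespace SimpleGraph

variable {V : Type u} {G : SimpleGraph V}

theorem exists_iso_coronaK1 [Fintype V] [DecidableEq V]
    (hsupp : ∀ ℓ₁ ℓ₂ s, G.neighborSet ℓ₁ = {s} → G.neighborSet ℓ₂ = {s} → ℓ₁ = ℓ₂)
    (hcard : 2 * #G.pendantPairs = Fintype.card V) :
    ∃ (W : Type u) (_ : Fintype W) (H : SimpleGraph W),
      Fintype.card W = #G.pendantPairs ∧ Nonempty (G ≃g coronaK1 H) := by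
  choose ℓ s hℓ hP using fun P : G.pendantPairs => mem_pendantPairs.1 P.2
  have hadj (P : G.pendantPairs) (u : V) : G.Adj u (ℓ P) ↔ u = s P :=
    (G.adj_comm _ _).trans (Set.ext_iff.1 (hℓ P) u)
  let f : G.pendantPairs × Bool → V := fun p => bif p.2 then ℓ p.1 else s p.1
  have hf_mem (p : G.pendantPairs × Bool) : f p ∈ p.1.1 := by
    obtain ⟨P, _ | _⟩ := p <;> simp [f, hP]
  have hinj : f.Injective := by
    rintro ⟨P, x⟩ ⟨Q, y⟩ hxy
    obtain rfl : P = Q := Subtype.ext <|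
      eq_of_mem_pendantPairs hsupp P.2 Q.2 (hf_mem (P, x)) (hxy ▸ hf_mem (Q, y))
    have hne : ℓ P ≠ s P := ((hadj P (s P)).2 rfl).ne'
    cases x <;> cases y
    · rfl
    · exact absurd hxy.symm hne
    · exact absurd hxy hne
    · rfl
  have hbij : f.Bijective := (Fintype.bijective_iff_injective_and_card f).2
    ⟨hinj, by rw [Fintype.card_prod, Fintype.card_coe, Fintype.card_bool, mul_comm, hcard]⟩
  exact ⟨G.pendantPairs, inferInstance, _, Fintype.card_coe _,
    nonempty_iso_coronaK1 (Equiv.ofBijective f hbij) hadj⟩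

end SimpleGraph

open SimpleGraph in
/-- For a finite graph `G` on `2n` vertices, `D(G,x) = (x²+2x)ⁿ` if and only if
`G ≅ H ∘ K₁` for some graph `H` of order `n`. -/
theorem domPoly_eq_iff_corona {V : Type} [Fintype V] (G : SimpleGraph V) (n : ℕ)
    (hcard : Fintype.card V = 2 * n) :
    domPoly G = (X ^ 2 + 2 * X) ^ n ↔
      ∃ (W : Type) (_ : Fintype W) (H : SimpleGraph W),
        Fintype.card W = n ∧ Nonempty (G ≃g coronaK1 H) := by
  classical
  refine ⟨fun hpoly => ?_, fun ⟨W, _, H, hW, ⟨e⟩⟩ => by rw [e.domPoly_eq, domPoly_coronaK1, hW]⟩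
  obtain rfl | hn := n.eq_zero_or_pos
  · have : IsEmpty V := Fintype.card_eq_zero_iff.1 hcard
    exact ⟨Empty, inferInstance, ⊥, rfl, ⟨⟨Equiv.equivOfIsEmpty _ _, fun {a} => isEmptyElim a⟩⟩⟩
  have hcount {i : ℕ} (j : ℕ) (h : i + j = 2 * n) := domCount_eq_of_domPoly_eq hpoly h
  have hγ (D : Finset V) (hD : G.IsDomSet D) : n ≤ #D := by
    have := lt_card_of_domCount_eq_zero (i := n - 1)
      (by rw [hcount (n + 1) (by omega), Nat.choose_eq_zero_of_lt (by omega), mul_zero])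
      (by omega) hD
    omega
  have hδ : ∀ v, ∃ u, G.Adj u v :=
    exists_adj_of_domCount_eq (i := 2 * n - 1) (by omega)
      (by rw [hcount 1 (by omega), hcard]; simp)
  have hpp : #G.pendantPairs = n := by
    have := domCount_add_card_pendantPairs hδ (by omega : 2 * n - 2 + 2 = _)
    rw [hcount 2 (by omega), hcard, Nat.choose_two_mul_two] at this
    omega
  have hsupp (ℓ₁ ℓ₂ s : V) (h₁ : G.neighborSet ℓ₁ = {s}) (h₂ : G.neighborSet ℓ₂ = {s}) :
      ℓ₁ = ℓ₂ := by
    by_contra hne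
    obtain ⟨D, hD, hDcard⟩ := exists_isDomSet_two_mul_card_lt h₁ h₂ hne hδ
    have := hγ D hD
    omega
  obtain ⟨W, _, H, hW, hiso⟩ := exists_iso_coronaK1 hsupp (by omega)
  exact ⟨W, _, H, hW.trans hpp, hiso⟩
end

section
/- For every positive integer n, the domination polynomial of the Cartesian product K_n □ K_2 is D(K_n □ K_2, x) = ((1+x)^n − 1)^2 + 2x^n. -/
open Polynomial

/-!
Split a vertex set `S` of `Kₙ □ K₂` into its two layers `A` and `B`. A vertex of the first layer
is dominated as soon as `A` is nonempty (it is then in `A` or adjacent to a vertex of `A`), and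
otherwise only by its copy in `B`. So `S` dominates iff both layers are nonempty, or one layer is
empty and the other is everything. The first case contributes `((1+x)ⁿ - 1)²`, the other two
contribute `xⁿ` each.
-/

open Finset

namespace Finset

variable {V W : Type*} [Fintype V] [DecidableEq V] [DecidableEq W]

def layer (S : Finset (V × W)) (w : W) : Finset V := {v | (v, w) ∈ S}

@[simp]
lemma mem_layer {S : Finset (V × W)} {v : V} {w : W} : v ∈ S.layer w ↔ (v, w) ∈ S := by
  simp [layer]

variable [Fintype W]

@[simps]
def layerEquiv : Finset (V × W) ≃ (W → Finset V) where
  toFun := layer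
  invFun f := {p | p.1 ∈ f p.2}
  left_inv S := by ext; simp
  right_inv f := by ext; simp

lemma card_eq_sum_card_layer (S : Finset (V × W)) : #S = ∑ w, #(S.layer w) :=
  calc #S = ∑ p : V × W, if p ∈ S then 1 else 0 := by simp
    _ = ∑ w, ∑ v, if (v, w) ∈ S then 1 else 0 := Fintype.sum_prod_type_right _
    _ = ∑ w, #(S.layer w) := by simp [layer]

end Finset

namespace SimpleGraph

variable {V W : Type*} [Fintype V] [DecidableEq V] [DecidableEq W]

lemma completeGraph_boxProd_dominates_iff (S : Finset (V × W)) (v : V) (w : W) :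
    ((v, w) ∈ S ∨ ∃ u ∈ S, ((⊤ : SimpleGraph V) □ (⊤ : SimpleGraph W)).Adj u (v, w)) ↔
      (S.layer w).Nonempty ∨ ∃ w' ≠ w, v ∈ S.layer w' := by
  simp only [Prod.exists, boxProd_adj, top_adj, Finset.Nonempty, mem_layer]
  grind

lemma isDomSet_completeGraph_boxProd_iff (S : Finset (V × W)) :
    ((⊤ : SimpleGraph V) □ (⊤ : SimpleGraph W)).IsDomSet S ↔
      ∀ w, (S.layer w).Nonempty ∨ ∀ v, ∃ w' ≠ w, v ∈ S.layer w' := by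
  simp only [IsDomSet, Prod.forall, completeGraph_boxProd_dominates_iff]
  rw [forall_comm]
  simp only [forall_or_left]

lemma domPoly_completeGraph_boxProd_completeGraph_two :
    domPoly ((⊤ : SimpleGraph V) □ (⊤ : SimpleGraph (Fin 2))) =
      ∑ p : Finset V × Finset V with
        (p.1.Nonempty ∨ p.2 = univ) ∧ (p.2.Nonempty ∨ p.1 = univ), X ^ (#p.1 + #p.2) := by
  classical
  rw [domPoly, sum_filter, sum_filter]
  refine Fintype.sum_equiv (layerEquiv.trans (finTwoArrowEquiv _)) _ _ fun S => ?_
  simp [isDomSet_completeGraph_boxProd_iff, card_eq_sum_card_layer, Fin.forall_fin_two,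
    Fin.exists_fin_two, eq_univ_iff_forall]

end SimpleGraph

section

variable {V R : Type*} [Fintype V] [CommRing R]

lemma sum_pow_card_filter_nonempty (x : R) :
    ∑ A : Finset V with A.Nonempty, x ^ #A = (1 + x) ^ Fintype.card V - 1 := by
  classical
  have hbinom := Fintype.sum_pow_mul_eq_add_pow V x 1
  rw [← sum_filter_add_sum_filter_not _ Finset.Nonempty] at hbinom
  simp only [one_pow, mul_one, not_nonempty_iff_eq_empty, filter_eq', mem_univ, ↓reduceIte,
    sum_singleton, card_empty, pow_zero] at hbinom
  rw [add_comm 1 x, ← hbinom]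
  ring

lemma sum_pow_card_add_card_filter_dominating [DecidableEq V] [Nonempty V] (x : R) :
    ∑ p : Finset V × Finset V with (p.1.Nonempty ∨ p.2 = univ) ∧ (p.2.Nonempty ∨ p.1 = univ),
      x ^ (#p.1 + #p.2) = ((1 + x) ^ Fintype.card V - 1) ^ 2 + 2 * x ^ Fintype.card V := by
  have hsplit : ({p : Finset V × Finset V |
      (p.1.Nonempty ∨ p.2 = univ) ∧ (p.2.Nonempty ∨ p.1 = univ)} : Finset _) =
      insert (univ, ∅) (insert (∅, univ)
        ((univ.filter Finset.Nonempty) ×ˢ (univ.filter Finset.Nonempty))) := by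
    ext ⟨A, B⟩
    simp only [nonempty_iff_ne_empty, ne_eq, mem_filter, mem_univ, true_and, mem_insert,
      Prod.mk.injEq, mem_product]
    grind [univ_nonempty]
  rw [hsplit, sum_insert, sum_insert, sum_product]
  · simp_rw [pow_add, ← sum_mul_sum, sum_pow_card_filter_nonempty]
    simp only [card_univ, card_empty, pow_zero, mul_one, one_mul]
    ring
  · simp
  · simp [univ_nonempty.ne_empty]

end

/-- For every `n ≥ 1`, the domination polynomial of the Cartesian (box) product
`Kₙ □ K₂` is `D(Kₙ □ K₂, x) = ((1+x)ⁿ − 1)² + 2xⁿ`. -/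
theorem domPoly_completeBoxProdK2 (n : ℕ) (hn : 1 ≤ n) :
    domPoly ((⊤ : SimpleGraph (Fin n)).boxProd (⊤ : SimpleGraph (Fin 2))) =
      ((1 + X) ^ n - 1) ^ 2 + 2 * X ^ n := by
  have : Nonempty (Fin n) := ⟨⟨0, hn⟩⟩
  rw [SimpleGraph.domPoly_completeGraph_boxProd_completeGraph_two,
    sum_pow_card_add_card_filter_dominating, Fintype.card_fin]
end
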